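/- arXiv:0903.3751 — 2 statements merged into one kernel-verified Lean document; each statement's English description precedes it below -/
import Mathlib

section
/- Let g = g₁⋯g_r be an element of G = A ∗_C B given in a cyclically reduced form with r ≥ 2, and let h be a cyclically reduced element of G conjugate to g in G, with cyclically reduced form h = h₁⋯h_s. Then s = r, and there exist an index i ∈ {1, …, r} and an element c ∈ C such that h = c⁻¹·(g_i g_{i+1}⋯g_r g₁⋯g_{i−1})·c; that is, h is obtained from g by a cyclic permutation of g₁, …, g_r followed by conjugation by an element of C. -/
/-!
Conjugating `g = g₁⋯g_r` by one element of `A ∪ B` at a time, every conjugate of `g` is either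
`c P c⁻¹` with `c ∈ C` and `P` a cyclic permutation of `g₁, …, g_r`, or `w P w⁻¹` where the
last letter of the reduced word `w` fuses with the first letter of `P` into a single letter.
In the second case the element has a reduced form of length `2|w| + r - 1`, which is odd and
at least `3`. By the normal form theorem all reduced forms of an element have the same length,
and a cyclically reduced form of length `≥ 2` alternates between the factors all around the
cycle, so its length is even. Hence a cyclically reduced conjugate is of the first kind, and
its length is `r`.
-/

open Monoid

universe u

/-- The two factors of the amalgam, indexed by `Bool`. -/
def Fac (A B : Type u) : Bool → Type u
  | true => A
  | false => B

instance FacGroup (A B : Type u) [Group A] [Group B] : (b : Bool) → Group (Fac A B b)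
  | true => inferInstanceAs (Group A)
  | false => inferInstanceAs (Group B)

variable {A B C : Type u} [Group A] [Group B] [Group C]

/-- The family of monomorphisms `C → A`, `C → B`. -/
def amalgHom (φ : C →* A) (ψ : C →* B) : (b : Bool) → C →* Fac A B b
  | true => φ
  | false => ψ

variable (φ : C →* A) (ψ : C →* B)

/-- The amalgamated free product `G = A ∗_C B`, i.e. the pushout of `φ` and `ψ`. -/
abbrev Amalg : Type u := Monoid.PushoutI (amalgHom φ ψ)

/-- The factor `A`, identified with its image in `G = A ∗_C B`. -/
def facA : Subgroup (Amalg φ ψ) := (Monoid.PushoutI.of (φ := amalgHom φ ψ) true).range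

/-- The factor `B`, identified with its image in `G = A ∗_C B`. -/
def facB : Subgroup (Amalg φ ψ) := (Monoid.PushoutI.of (φ := amalgHom φ ψ) false).range

/-- The amalgamated subgroup `C`, identified with its image in `G = A ∗_C B`. -/
def amalgC : Subgroup (Amalg φ ψ) := (Monoid.PushoutI.base (amalgHom φ ψ)).range

/-- `c * g₁ ⋯ gₙ` (with the list `L = [g₁, …, gₙ]`) is a reduced form:
`c ∈ C`, each `gᵢ ∈ (A ∪ B) ∖ C`, and consecutive letters lie in different factors. -/
def ReducedForm (c : Amalg φ ψ) (L : List (Amalg φ ψ)) : Prop :=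
  c ∈ amalgC φ ψ ∧
  (∀ x ∈ L, (x ∈ facA φ ψ ∨ x ∈ facB φ ψ) ∧ x ∉ amalgC φ ψ) ∧
  L.Chain' (fun x y => (x ∈ facA φ ψ → y ∈ facB φ ψ) ∧ (x ∈ facB φ ψ → y ∈ facA φ ψ))

/-- A reduced form `c * g₁ ⋯ gₙ` is cyclically reduced if `n = 0`, or `n = 1` and the
element is not conjugate to an element of `C`, or `n ≥ 2` and `g₁`, `gₙ` lie in different
factors. -/
def CyclicallyReducedForm (c : Amalg φ ψ) (L : List (Amalg φ ψ)) : Prop :=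
  ReducedForm φ ψ c L ∧
  (L.length = 0 ∨
    (L.length = 1 ∧ ∀ x : Amalg φ ψ, x⁻¹ * (c * L.prod) * x ∉ amalgC φ ψ) ∨
    (2 ≤ L.length ∧ ∀ x y : Amalg φ ψ, x ∈ L.head? → y ∈ L.getLast? →
      ((x ∈ facA φ ψ → y ∈ facB φ ψ) ∧ (x ∈ facB φ ψ → y ∈ facA φ ψ))))

/-- An element of `G = A ∗_C B` is cyclically reduced if it has a cyclically reduced
reduced form. -/
def CyclicallyReduced (g : Amalg φ ψ) : Prop :=
  ∃ (c : Amalg φ ψ) (L : List (Amalg φ ψ)), g = c * L.prod ∧ CyclicallyReducedForm φ ψ c L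

lemma Cycle.even_length_of_chain_ne {l : List Bool}
    (h : Cycle.Chain (· ≠ ·) (l : Cycle Bool)) : Even l.length := by
  have alternating : ∀ (l : List Bool) (a c : Bool),
      (a :: (l ++ [c])).IsChain (· ≠ ·) → (Odd l.length ↔ a = c) := by
    intro l
    induction l with
    | nil => intro a c h; simpa using h
    | cons b l ih =>
      intro a c h
      rw [List.cons_append, List.isChain_cons_cons] at h
      have := ih b c h.2
      cases a <;> cases b <;> cases c <;> simp_all [Nat.odd_add_one]
  cases l with
  | nil => simp
  | cons a l =>
    rw [Cycle.chain_coe_cons] at h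
    simpa [Nat.even_add_one] using (alternating l a a h).2 rfl

open PushoutI

namespace Amalg

variable {φ ψ}

lemma amalgHom_injective (hφ : Function.Injective φ) (hψ : Function.Injective ψ) :
    ∀ b, Function.Injective (amalgHom φ ψ b)
  | true => hφ
  | false => hψ

variable (φ ψ) in
def factor (b : Bool) : Subgroup (Amalg φ ψ) := (PushoutI.of (φ := amalgHom φ ψ) b).range

lemma amalgC_le_factor (b : Bool) : amalgC φ ψ ≤ factor φ ψ b := by
  rintro _ ⟨c, rfl⟩
  exact ⟨amalgHom φ ψ b c, of_apply_eq_base (amalgHom φ ψ) b c⟩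

lemma mem_amalgC_of_mem_factor_not (hinj : ∀ b, Function.Injective (amalgHom φ ψ b))
    {x : Amalg φ ψ} {b : Bool} (h : x ∈ factor φ ψ b) (h' : x ∈ factor φ ψ (!b)) :
    x ∈ amalgC φ ψ := by
  rw [amalgC, ← inf_of_range_eq_base_range hinj (i := b) (j := !b) (by cases b <;> decide)]
  exact ⟨h, h'⟩

/-- The factor of a letter: `true` for `A`, `false` for `B` (and for everything outside `A`). -/
noncomputable def factorOf (x : Amalg φ ψ) : Bool := by
  classical exact decide (x ∈ factor φ ψ true)

lemma factorOf_eq_true_iff {x : Amalg φ ψ} : factorOf x = true ↔ x ∈ factor φ ψ true := by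
  simp [factorOf]

lemma factorOf_eq_of_mem (hinj : ∀ b, Function.Injective (amalgHom φ ψ b))
    {x : Amalg φ ψ} {b : Bool} (h : x ∈ factor φ ψ b) (hx : x ∉ amalgC φ ψ) :
    factorOf x = b := by
  cases b with
  | true => exact factorOf_eq_true_iff.2 h
  | false =>
    rw [← Bool.not_eq_true, factorOf_eq_true_iff]
    exact fun h' => hx (mem_amalgC_of_mem_factor_not hinj h h')

lemma factorOf_inv (x : Amalg φ ψ) : factorOf x⁻¹ = factorOf x := by
  simp [factorOf]

lemma factorOf_mul_left {c : Amalg φ ψ} (hc : c ∈ amalgC φ ψ) (x : Amalg φ ψ) :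
    factorOf (c * x) = factorOf x := by
  simp [factorOf, Subgroup.mul_mem_cancel_left _ (amalgC_le_factor true hc)]

lemma factorOf_mul_right {c : Amalg φ ψ} (hc : c ∈ amalgC φ ψ) (x : Amalg φ ψ) :
    factorOf (x * c) = factorOf x := by
  simp [factorOf, Subgroup.mul_mem_cancel_right _ (amalgC_le_factor true hc)]

/-- A letter is an element of `(A ∪ B) ∖ C`. -/
def IsLetter (x : Amalg φ ψ) : Prop := x ∈ factor φ ψ (factorOf x) ∧ x ∉ amalgC φ ψ

lemma isLetter_of_mem (hinj : ∀ b, Function.Injective (amalgHom φ ψ b))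
    {x : Amalg φ ψ} {b : Bool} (h : x ∈ factor φ ψ b) (hx : x ∉ amalgC φ ψ) : IsLetter x :=
  ⟨factorOf_eq_of_mem hinj h hx ▸ h, hx⟩

lemma isLetter_of_reducedForm {x : Amalg φ ψ}
    (h : (x ∈ facA φ ψ ∨ x ∈ facB φ ψ) ∧ x ∉ amalgC φ ψ) : IsLetter x := by
  refine ⟨?_, h.2⟩
  by_cases hA : x ∈ factor φ ψ true
  · rwa [factorOf_eq_true_iff.2 hA]
  · rw [Bool.eq_false_iff.2 (mt factorOf_eq_true_iff.1 hA)]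
    exact h.1.resolve_left hA

lemma IsLetter.inv {x : Amalg φ ψ} (h : IsLetter x) : IsLetter x⁻¹ :=
  ⟨by simpa [factorOf_inv] using h.1, by simpa using h.2⟩

lemma IsLetter.mul_left {x c : Amalg φ ψ} (h : IsLetter x) (hc : c ∈ amalgC φ ψ) :
    IsLetter (c * x) :=
  ⟨factorOf_mul_left hc x ▸ mul_mem (amalgC_le_factor _ hc) h.1,
    fun h' => h.2 (by simpa using mul_mem (inv_mem hc) h')⟩

lemma IsLetter.mul_right {x c : Amalg φ ψ} (h : IsLetter x) (hc : c ∈ amalgC φ ψ) :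
    IsLetter (x * c) :=
  ⟨factorOf_mul_right hc x ▸ mul_mem h.1 (amalgC_le_factor _ hc),
    fun h' => h.2 (by simpa using mul_mem h' (inv_mem hc))⟩

lemma factorOf_ne_of_reducedForm (hinj : ∀ b, Function.Injective (amalgHom φ ψ b))
    {x y : Amalg φ ψ} (hx : IsLetter x) (hy : IsLetter y)
    (h : (x ∈ facA φ ψ → y ∈ facB φ ψ) ∧ (x ∈ facB φ ψ → y ∈ facA φ ψ)) :
    factorOf x ≠ factorOf y := by
  have hx₁ := hx.1
  cases hfx : factorOf x <;> rw [hfx] at hx₁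
  · rw [factorOf_eq_true_iff.2 (h.2 hx₁)]; decide
  · rw [factorOf_eq_of_mem hinj (h.1 hx₁) hy.2]; decide

structure IsReducedWord (l : List (Amalg φ ψ)) : Prop where
  isLetter : ∀ x ∈ l, IsLetter x
  isChain : (l.map factorOf).IsChain (· ≠ ·)

lemma _root_.ReducedForm.isReducedWord (hinj : ∀ b, Function.Injective (amalgHom φ ψ b))
    {c : Amalg φ ψ} {l : List (Amalg φ ψ)} (h : ReducedForm φ ψ c l) : IsReducedWord l := by
  have hlet : ∀ x ∈ l, IsLetter x := fun x hx => isLetter_of_reducedForm (h.2.1 x hx)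
  refine ⟨hlet, List.isChain_map _ |>.2 ?_⟩
  exact h.2.2.imp_of_mem_imp fun x y hx hy hxy =>
    factorOf_ne_of_reducedForm hinj (hlet x hx) (hlet y hy) hxy

namespace IsReducedWord

variable {l l₁ l₂ : List (Amalg φ ψ)} {x y : Amalg φ ψ}

lemma singleton (hx : IsLetter x) : IsReducedWord [x] :=
  ⟨by simpa using hx, by simp⟩

lemma cons (hx : IsLetter x) (hl : IsReducedWord l)
    (h : ∀ y ∈ l.head?, factorOf x ≠ factorOf y) : IsReducedWord (x :: l) :=
  ⟨List.forall_mem_cons.2 ⟨hx, hl.isLetter⟩,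
    List.isChain_cons.2 ⟨by simpa using h, hl.isChain⟩⟩

lemma tail (h : IsReducedWord (x :: l)) : IsReducedWord l :=
  ⟨fun y hy => h.isLetter y (List.mem_cons_of_mem x hy), h.isChain.tail⟩

lemma append (h₁ : IsReducedWord l₁) (h₂ : IsReducedWord l₂)
    (h : ∀ x ∈ l₁.getLast?, ∀ y ∈ l₂.head?, factorOf x ≠ factorOf y) :
    IsReducedWord (l₁ ++ l₂) :=
  ⟨List.forall_mem_append.2 ⟨h₁.isLetter, h₂.isLetter⟩,
    by simpa [List.isChain_append, h₁.isChain, h₂.isChain] using h⟩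

lemma inv_reverse (h : IsReducedWord l) : IsReducedWord (l.map (·⁻¹)).reverse := by
  refine ⟨fun x hx => ?_, ?_⟩
  · obtain ⟨y, hy, rfl⟩ := List.mem_map.1 (List.mem_reverse.1 hx)
    exact (h.isLetter y hy).inv
  · rw [List.map_reverse, List.map_map, List.isChain_reverse,
      show factorOf ∘ (·⁻¹) = (factorOf : Amalg φ ψ → Bool) from funext factorOf_inv]
    exact h.isChain.imp fun _ _ => Ne.symm

lemma map_conj (h : IsReducedWord l) {c : Amalg φ ψ} (hc : c ∈ amalgC φ ψ) :
    IsReducedWord (l.map (MulAut.conj c)) := by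
  refine ⟨fun x hx => ?_, ?_⟩
  · obtain ⟨y, hy, rfl⟩ := List.mem_map.1 hx
    exact ((h.isLetter y hy).mul_left hc).mul_right (inv_mem hc)
  · rw [List.map_map, show factorOf ∘ MulAut.conj c = (factorOf : Amalg φ ψ → Bool) from
      funext fun x => by
        rw [Function.comp, MulAut.conj_apply, factorOf_mul_right (inv_mem hc),
          factorOf_mul_left hc]]
    exact h.isChain

lemma fuse (hinj : ∀ b, Function.Injective (amalgHom φ ψ b)) {r p : Amalg φ ψ}
    (h₁ : IsReducedWord (l₁ ++ [r])) (h₂ : IsReducedWord (p :: l₂))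
    (hrp : factorOf r = factorOf p) (hC : r * p ∉ amalgC φ ψ) :
    IsReducedWord (l₁ ++ r * p :: l₂) := by
  have hr := h₁.isLetter r (by simp)
  have hmem : r * p ∈ factor φ ψ (factorOf r) :=
    mul_mem hr.1 (hrp ▸ (h₂.isLetter p (by simp)).1)
  have hf := factorOf_eq_of_mem hinj hmem hC
  refine ⟨fun x hx => ?_, ?_⟩
  · simp only [List.mem_append, List.mem_cons] at hx
    rcases hx with hx | rfl | hx
    · exact h₁.isLetter x (by simp [hx])
    · exact isLetter_of_mem hinj hmem hC
    · exact h₂.tail.isLetter x hx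
  · have hmap : (l₁ ++ r * p :: l₂).map factorOf =
        (l₁ ++ [r]).map factorOf ++ l₂.map factorOf := by
      simp [hf]
    rw [hmap, List.isChain_append]
    refine ⟨h₁.isChain, h₂.tail.isChain, ?_⟩
    simpa [hrp] using (List.isChain_cons.1 h₂.isChain).1

end IsReducedWord

/-- A preimage of `x` in the factor `factorOf x`, whenever `x` lies in that factor. -/
noncomputable def toSigma (x : Amalg φ ψ) : Σ b, Fac A B b :=
  ⟨factorOf x, Function.invFun (PushoutI.of (φ := amalgHom φ ψ) (factorOf x)) x⟩

lemma of_toSigma {x : Amalg φ ψ} (h : x ∈ factor φ ψ (factorOf x)) :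
    PushoutI.of (toSigma x).1 (toSigma x).2 = x :=
  Function.invFun_eq h

lemma IsReducedWord.exists_word {l : List (Amalg φ ψ)} (hl : IsReducedWord l) :
    ∃ w : CoprodI.Word (Fac A B), Reduced (amalgHom φ ψ) w ∧
      ofCoprodI w.prod = l.prod ∧ w.toList.length = l.length := by
  refine ⟨⟨l.map toSigma, ?_, ?_⟩, ?_, ?_, by simp⟩
  · simp only [List.mem_map]
    rintro _ ⟨x, hx, rfl⟩ h1
    apply (hl.isLetter x hx).2
    rw [← of_toSigma (hl.isLetter x hx).1, h1, map_one]
    exact one_mem _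
  · exact (List.isChain_map _).2 ((List.isChain_map _).1 hl.isChain)
  · simp only [Reduced, List.mem_map]
    rintro _ ⟨x, hx, rfl⟩ ⟨c, hc⟩
    apply (hl.isLetter x hx).2
    rw [← of_toSigma (hl.isLetter x hx).1, ← hc, of_apply_eq_base]
    exact ⟨c, rfl⟩
  · simp only [CoprodI.Word.prod, map_list_prod, List.map_map]
    conv_rhs => rw [← List.map_id l]
    congr 1
    refine List.map_congr_left fun x hx => ?_
    simp [of_toSigma (hl.isLetter x hx).1]

lemma IsReducedWord.length_eq_of_prod_eq (hinj : ∀ b, Function.Injective (amalgHom φ ψ b))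
    {l₁ l₂ : List (Amalg φ ψ)} (h₁ : IsReducedWord l₁) (h₂ : IsReducedWord l₂)
    (h : l₁.prod = l₂.prod) : l₁.length = l₂.length := by
  obtain ⟨w₁, hr₁, hp₁, hl₁⟩ := h₁.exists_word
  obtain ⟨w₂, hr₂, hp₂, hl₂⟩ := h₂.exists_word
  obtain ⟨d⟩ := NormalWord.transversal_nonempty _ hinj
  obtain ⟨v₁, hv₁, hm₁⟩ := hr₁.exists_normalWord_prod_eq d
  obtain ⟨v₂, hv₂, hm₂⟩ := hr₂.exists_normalWord_prod_eq d
  have hv : v₁ = v₂ := NormalWord.prod_injective (by rw [hv₁, hv₂, hp₁, hp₂, h])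
  rw [← hl₁, ← hl₂, ← List.length_map Sigma.fst, ← hm₁, hv, hm₂, List.length_map]

/-- A cyclically reduced word of length `≥ 2`. -/
structure IsCyclicWord (P : List (Amalg φ ψ)) : Prop where
  isLetter : ∀ x ∈ P, IsLetter x
  chain : Cycle.Chain (· ≠ ·) (P.map factorOf : Cycle Bool)
  two_le_length : 2 ≤ P.length

lemma _root_.CyclicallyReducedForm.isCyclicWord
    (hinj : ∀ b, Function.Injective (amalgHom φ ψ b)) {c : Amalg φ ψ} {P : List (Amalg φ ψ)}
    (h : CyclicallyReducedForm φ ψ c P) (hP : 2 ≤ P.length) : IsCyclicWord P := by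
  have hred := h.1.isReducedWord hinj
  obtain ⟨p, Q, rfl⟩ := List.exists_cons_of_length_pos (by omega : 0 < P.length)
  refine ⟨hred.isLetter, ?_, hP⟩
  obtain h0 | h1 | ⟨-, hend⟩ := h.2
  · simp at h0
  · have := h1.1; omega
  rw [List.map_cons, Cycle.chain_coe_cons, ← List.cons_append, ← List.map_cons,
    List.isChain_append]
  refine ⟨hred.isChain, by simp, ?_⟩
  simp only [List.getLast?_map, Option.mem_map, List.head?_cons, Option.mem_some_iff]
  rintro _ ⟨pl, hpl, rfl⟩ _ rfl
  exact (factorOf_ne_of_reducedForm hinj (hred.isLetter p (by simp))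
    (hred.isLetter pl (List.mem_of_mem_getLast? hpl)) (hend p pl rfl hpl)).symm

namespace IsCyclicWord

variable {P L : List (Amalg φ ψ)}

lemma exists_cons (h : IsCyclicWord P) : ∃ p Q, P = p :: Q :=
  List.exists_cons_of_length_pos (by have := h.two_le_length; omega)

lemma isReducedWord (h : IsCyclicWord P) : IsReducedWord P := by
  refine ⟨h.isLetter, ?_⟩
  have := h.chain
  obtain ⟨p, Q, rfl⟩ := h.exists_cons
  rw [List.map_cons, Cycle.chain_coe_cons, ← List.cons_append] at this
  exact this.left_of_append

lemma of_isRotated (h : IsCyclicWord L) (hP : P ~r L) : IsCyclicWord P :=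
  ⟨fun x hx => h.isLetter x (hP.mem_iff.1 hx), Cycle.coe_eq_coe.2 (hP.map factorOf) ▸ h.chain,
    hP.perm.length_eq ▸ h.two_le_length⟩

lemma even_length (h : IsCyclicWord P) : Even P.length := by
  simpa using Cycle.even_length_of_chain_ne h.chain

lemma exists_eq_cons_append (h : IsCyclicWord P) :
    ∃ p Q pl, P = p :: (Q ++ [pl]) ∧ factorOf pl ≠ factorOf p := by
  obtain ⟨p, R, rfl⟩ := h.exists_cons
  obtain rfl | ⟨Q, pl, rfl⟩ := R.eq_nil_or_concat'
  · simpa using h.two_le_length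
  refine ⟨p, Q, pl, rfl, ?_⟩
  have := h.chain
  rw [List.map_cons, Cycle.chain_coe_cons, ← List.cons_append, List.isChain_append] at this
  exact this.2.2 _ (by simp [List.getLast?_cons]) _ rfl

end IsCyclicWord

/-- The last letter of `w` fuses with the first letter of `P` into a single letter, so that
`w P w⁻¹` has a reduced form of length `2 |w| + |P| - 1`. -/
structure FusesWith (w P : List (Amalg φ ψ)) : Prop where
  isReducedWord : IsReducedWord w
  ne_nil : w ≠ []
  getLast_head : ∀ r ∈ w.getLast?, ∀ p ∈ P.head?,
    factorOf r = factorOf p ∧ r * p ∉ amalgC φ ψ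

namespace FusesWith

variable {w ws P : List (Amalg φ ψ)} {o : Amalg φ ψ}

lemma cons (h : FusesWith w P) {v : Amalg φ ψ} (hv : IsLetter v)
    (hvw : ∀ o ∈ w.head?, factorOf v ≠ factorOf o) : FusesWith (v :: w) P := by
  obtain ⟨o, ws, rfl⟩ := List.exists_cons_of_ne_nil h.ne_nil
  exact ⟨h.isReducedWord.cons hv hvw, List.cons_ne_nil _ _, by simpa using h.getLast_head⟩

lemma tail (h : FusesWith (o :: ws) P) (hws : ws ≠ []) : FusesWith ws P := by
  obtain ⟨o₂, ws, rfl⟩ := List.exists_cons_of_ne_nil hws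
  exact ⟨h.isReducedWord.tail, hws, by simpa using h.getLast_head⟩

lemma replace_head (h : FusesWith (o :: ws) P) (hws : ws ≠ []) {o' : Amalg φ ψ}
    (ho' : IsLetter o') (hf : factorOf o' = factorOf o) : FusesWith (o' :: ws) P :=
  (h.tail hws).cons ho' (by simpa [hf] using (List.isChain_cons.1 h.isReducedWord.isChain).1)

lemma mul_head (h : FusesWith (o :: ws) P) {c : Amalg φ ψ} (hc : c ∈ amalgC φ ψ) :
    FusesWith (c * o :: ws) P := by
  have ho := (h.isReducedWord.isLetter o (by simp)).mul_left hc
  obtain rfl | hws := eq_or_ne ws []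
  · refine ⟨.singleton ho, by simp, ?_⟩
    simp only [List.getLast?_singleton, Option.mem_some_iff, forall_eq', factorOf_mul_left hc]
    intro p hp
    obtain ⟨hf, hC⟩ := h.getLast_head o rfl p hp
    exact ⟨hf, fun h' => hC (by simpa [mul_assoc] using mul_mem (inv_mem hc) h')⟩
  · exact h.replace_head hws ho (factorOf_mul_left hc o)

lemma exists_reducedWord (hinj : ∀ b, Function.Injective (amalgHom φ ψ b))
    (h : FusesWith w P) (hP : IsCyclicWord P) :
    ∃ F, IsReducedWord F ∧ F.prod = w.prod * P.prod * w.prod⁻¹ ∧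
      F.length + 1 = 2 * w.length + P.length := by
  obtain ⟨ws, r, rfl⟩ := (List.eq_nil_or_concat' w).resolve_left h.ne_nil
  obtain ⟨p, Q, pl, rfl, hpl⟩ := hP.exists_eq_cons_append
  obtain ⟨hrp, hC⟩ := h.getLast_head r (by simp) p rfl
  refine ⟨(ws ++ r * p :: (Q ++ [pl])) ++ ((ws ++ [r]).map (·⁻¹)).reverse, ?_, ?_, ?_⟩
  · refine (h.isReducedWord.fuse hinj hP.isReducedWord hrp hC).append
      h.isReducedWord.inv_reverse ?_
    simp [List.getLast?_cons, factorOf_inv, hrp, hpl]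
  · rw [List.prod_append, ← List.prod_inv_reverse]
    simp only [List.prod_append, List.prod_cons, List.prod_nil, mul_one]
    group
  · simp
    omega

end FusesWith

def IsRotationConj (L : List (Amalg φ ψ)) (h : Amalg φ ψ) : Prop :=
  ∃ P, P ~r L ∧ ∃ c ∈ amalgC φ ψ, h = c * P.prod * c⁻¹

def IsFusedRotationConj (L : List (Amalg φ ψ)) (h : Amalg φ ψ) : Prop :=
  ∃ P, P ~r L ∧ ∃ w, FusesWith w P ∧ h = w.prod * P.prod * w.prod⁻¹

variable {L P : List (Amalg φ ψ)} {v : Amalg φ ψ} {b : Bool}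

lemma rotation_conj_of_mem_factor_head (hinj : ∀ b, Function.Injective (amalgHom φ ψ b))
    (hP : P ~r L) {p : Amalg φ ψ} {Q : List (Amalg φ ψ)} (hPQ : P = p :: Q)
    (hv : v ∈ factor φ ψ (factorOf p)) :
    IsRotationConj L (v * P.prod * v⁻¹) ∨ IsFusedRotationConj L (v * P.prod * v⁻¹) := by
  subst hPQ
  by_cases hvC : v ∈ amalgC φ ψ
  · exact .inl ⟨_, hP, v, hvC, rfl⟩
  by_cases hvp : v * p ∈ amalgC φ ψ
  · refine .inl ⟨Q ++ [p], (List.isRotated_concat p Q).trans hP, v * p, hvp, ?_⟩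
    simp only [List.prod_cons, List.prod_append, List.prod_nil, mul_one]
    group
  · refine .inr ⟨_, hP, [v], ⟨.singleton (isLetter_of_mem hinj hv hvC), by simp, ?_⟩, by simp⟩
    simp [factorOf_eq_of_mem hinj hv hvC, hvp]

lemma rotation_conj_of_mem_factor (hinj : ∀ b, Function.Injective (amalgHom φ ψ b))
    (hL : IsCyclicWord L) (hP : P ~r L) (hv : v ∈ factor φ ψ b) :
    IsRotationConj L (v * P.prod * v⁻¹) ∨ IsFusedRotationConj L (v * P.prod * v⁻¹) := by
  have hPc := hL.of_isRotated hP
  obtain ⟨p, Q, pl, rfl, hpl⟩ := hPc.exists_eq_cons_append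
  by_cases hb : b = factorOf p
  · exact rotation_conj_of_mem_factor_head hinj hP rfl (hb ▸ hv)
  have hb' : b = factorOf pl := by
    revert hb hpl; cases b <;> cases factorOf p <;> cases factorOf pl <;> simp
  have hP' : pl :: p :: Q ~r L := (List.isRotated_concat pl (p :: Q)).symm.trans hP
  have hvpl : v * pl⁻¹ ∈ factor φ ψ (factorOf pl) :=
    mul_mem (hb' ▸ hv) (inv_mem (hPc.isLetter pl (by simp)).1)
  have heq : v * (p :: (Q ++ [pl])).prod * v⁻¹
      = v * pl⁻¹ * (pl :: p :: Q).prod * (v * pl⁻¹)⁻¹ := by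
    simp only [List.prod_cons, List.prod_append, List.prod_nil, mul_one]
    group
  rw [heq]
  exact rotation_conj_of_mem_factor_head hinj hP' rfl hvpl

lemma FusesWith.conj_of_mem_factor (hinj : ∀ b, Function.Injective (amalgHom φ ψ b))
    (hL : IsCyclicWord L) (hP : P ~r L) {w : List (Amalg φ ψ)} (hw : FusesWith w P)
    (hv : v ∈ factor φ ψ b) :
    IsRotationConj L (v * (w.prod * P.prod * w.prod⁻¹) * v⁻¹) ∨
      IsFusedRotationConj L (v * (w.prod * P.prod * w.prod⁻¹) * v⁻¹) := by
  obtain ⟨o, ws, rfl⟩ := List.exists_cons_of_ne_nil hw.ne_nil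
  have ho := hw.isReducedWord.isLetter o (by simp)
  by_cases hvo : v ∈ factor φ ψ (factorOf o)
  · have hvo' : v * o ∈ factor φ ψ (factorOf o) := mul_mem hvo ho.1
    obtain rfl | hws := eq_or_ne ws []
    · have heq : v * ([o].prod * P.prod * [o].prod⁻¹) * v⁻¹
          = v * o * P.prod * (v * o)⁻¹ := by
        rw [List.prod_singleton]; group
      rw [heq]
      exact rotation_conj_of_mem_factor hinj hL hP hvo'
    right
    by_cases hvoC : v * o ∈ amalgC φ ψ
    · obtain ⟨o₂, ws, rfl⟩ := List.exists_cons_of_ne_nil hws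
      exact ⟨P, hP, _, (hw.tail hws).mul_head hvoC, by simp only [List.prod_cons]; group⟩
    · exact ⟨P, hP, _, hw.replace_head hws (isLetter_of_mem hinj hvo' hvoC)
        (factorOf_eq_of_mem hinj hvo' hvoC), by simp only [List.prod_cons]; group⟩
  · have hvC : v ∉ amalgC φ ψ := fun h => hvo (amalgC_le_factor _ h)
    refine .inr ⟨P, hP, v :: o :: ws, hw.cons (isLetter_of_mem hinj hv hvC) ?_,
      by simp only [List.prod_cons]; group⟩
    simp only [List.head?_cons, Option.mem_some_iff, forall_eq']
    intro hf
    exact hvo (hf ▸ factorOf_eq_of_mem hinj hv hvC ▸ hv)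

lemma conj_prod (hinj : ∀ b, Function.Injective (amalgHom φ ψ b)) (hL : IsCyclicWord L)
    (x : Amalg φ ψ) :
    IsRotationConj L (x * L.prod * x⁻¹) ∨ IsFusedRotationConj L (x * L.prod * x⁻¹) := by
  have step : ∀ {h v : Amalg φ ψ} {b : Bool}, v ∈ factor φ ψ b →
      IsRotationConj L h ∨ IsFusedRotationConj L h →
      IsRotationConj L (v * h * v⁻¹) ∨ IsFusedRotationConj L (v * h * v⁻¹) := by
    rintro h v b hv (⟨P, hP, c, hc, rfl⟩ | ⟨P, hP, w, hw, rfl⟩)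
    · have heq : v * (c * P.prod * c⁻¹) * v⁻¹ = v * c * P.prod * (v * c)⁻¹ := by group
      rw [heq]
      exact rotation_conj_of_mem_factor hinj hL hP (mul_mem hv (amalgC_le_factor b hc))
    · exact hw.conj_of_mem_factor hinj hL hP hv
  suffices ∀ h, IsRotationConj L h ∨ IsFusedRotationConj L h →
      IsRotationConj L (x * h * x⁻¹) ∨ IsFusedRotationConj L (x * h * x⁻¹) from
    this _ (.inl ⟨L, .refl L, 1, one_mem _, by simp⟩)
  induction x using PushoutI.induction_on with
  | of b g => exact fun h => step ⟨g, rfl⟩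
  | base c => exact fun h => step (amalgC_le_factor true ⟨c, rfl⟩)
  | mul x y ihx ihy =>
    intro h hh
    have heq : x * y * h * (x * y)⁻¹ = x * (y * h * y⁻¹) * x⁻¹ := by group
    rw [heq]
    exact ihx _ (ihy h hh)

end Amalg

/-- Conjugacy criterion, length `≥ 2` case: if `g = g₁⋯g_r` (`r ≥ 2`) and `h = h₁⋯h_s` are
cyclically reduced forms of conjugate elements, then `s = r` and `h` is obtained from `g` by a
cyclic permutation of `g₁, …, g_r` followed by conjugation by an element of `C`. -/
theorem conj_cyclic_permutation
    (hφ : Function.Injective φ) (hψ : Function.Injective ψ)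
    (L M : List (Amalg φ ψ))
    (hL : CyclicallyReducedForm φ ψ 1 L) (hr : 2 ≤ L.length)
    (hM : CyclicallyReducedForm φ ψ 1 M)
    (hconj : ∃ x : Amalg φ ψ, x⁻¹ * L.prod * x = M.prod) :
    M.length = L.length ∧
      ∃ i < L.length, ∃ c ∈ amalgC φ ψ, M.prod = c⁻¹ * (L.rotate i).prod * c := by
  have hinj := Amalg.amalgHom_injective hφ hψ
  have hLc := hL.isCyclicWord hinj hr
  have hMr := hM.1.isReducedWord hinj
  obtain ⟨x, hx⟩ := hconj
  rcases Amalg.conj_prod hinj hLc x⁻¹ with ⟨P, hP, c, hc, hxP⟩ | ⟨P, hP, w, hw, hxP⟩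
  · rw [inv_inv, hx] at hxP
    obtain ⟨n, -, rfl⟩ := List.isRotated_iff_mod.1 hP.symm
    have hlen := hMr.length_eq_of_prod_eq hinj
      ((hLc.of_isRotated hP).isReducedWord.map_conj hc) (by rw [hxP, ← map_list_prod]; rfl)
    refine ⟨by simpa using hlen, n % L.length, Nat.mod_lt _ (by omega), c⁻¹, inv_mem hc, ?_⟩
    rw [List.rotate_mod, hxP, inv_inv]
  · have hPc := hLc.of_isRotated hP
    obtain ⟨F, hF, hFprod, hFlen⟩ := hw.exists_reducedWord hinj hPc
    have hlen := hMr.length_eq_of_prod_eq hinj hF (by rw [hFprod, ← hxP, inv_inv, hx])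
    have hP2 := hPc.two_le_length
    have hw1 := List.length_pos_of_ne_nil hw.ne_nil
    have hMc := hM.isCyclicWord hinj (by omega)
    obtain ⟨k, hk⟩ := hMc.even_length
    obtain ⟨m, hm⟩ := hPc.even_length
    omega
end

section
/- Suppose C is malnormal in A (as a subgroup of the factor A of G = A ∗_C B). If g, h ∈ C are conjugate in G, then they are conjugate by an element of B: there exists b ∈ B with b⁻¹ g b = h. -/
open Monoid

universe u

variable {A B C : Type u} [Group A] [Group B] [Group C]

variable (φ : C →* A) (ψ : C →* B)

/-- `C` is malnormal in `K` (both viewed as subgroups of an ambient group):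
`C ∩ x⁻¹ C x = {1}` for every `x ∈ K ∖ C`. -/
def MalnormalIn {G : Type*} [Group G] (C K : Subgroup G) : Prop :=
  ∀ x ∈ K, x ∉ C → ∀ y ∈ C, x * y * x⁻¹ ∈ C → y = 1

/-! Write the conjugator in normal form `x = c · x₁ ⋯ xₙ` with `c ∈ C` and letters
`xₖ ∈ (A ∪ B) ∖ C` from alternating factors, and peel letters off from the left. Every partial
conjugate of `g` is again in `C`: otherwise it is a letter `a ∉ C` from the factor of `xₖ`, and
then `w⁻¹ a w` with `w = xₖ₊₁ ⋯ xₙ` is a nonempty reduced word, which never lies in `C`. Letters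
from `B` are absorbed into the conjugator `b`. A letter `a ∈ A ∖ C` with `a⁻¹ g a ∈ C` forces
`g = 1` by malnormality, and then `b = 1` works. -/

namespace Monoid.CoprodI.Word

variable {ι : Type*} {G : ι → Type*} [∀ i, Group (G i)]

def inv (w : Word G) : Word G where
  toList := (w.toList.map fun l => ⟨l.1, l.2⁻¹⟩).reverse
  ne_one := by
    simp only [List.mem_reverse, List.mem_map]
    rintro _ ⟨l, hl, rfl⟩
    simpa using w.ne_one l hl
  chain_ne := by
    rw [List.isChain_reverse, List.isChain_map]
    exact w.chain_ne.imp fun _ _ h => h.symm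

theorem prod_inv (w : Word G) : w.inv.prod = w.prod⁻¹ := by
  simp [inv, prod, List.prod_inv_reverse, List.map_reverse, Function.comp_def]

def append (u v : Word G) (h : ∀ x ∈ u.toList.getLast?, ∀ y ∈ v.toList.head?, x.1 ≠ y.1) :
    Word G where
  toList := u.toList ++ v.toList
  ne_one := by
    simpa [or_imp, forall_and] using ⟨u.ne_one, v.ne_one⟩
  chain_ne := u.chain_ne.append v.chain_ne h

theorem prod_append (u v : Word G) (h) : (u.append v h).prod = u.prod * v.prod := by
  simp [append, prod]

end Monoid.CoprodI.Word

namespace Monoid.PushoutI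

open CoprodI

variable {ι : Type*} {H : Type*} [Group H] {G : ι → Type*} [∀ i, Group (G i)]
  {φ : ∀ i, H →* G i}

theorem of_mem_base_range_iff (hφ : ∀ i, Function.Injective (φ i)) {i : ι} {a : G i} :
    of i a ∈ (base φ).range ↔ a ∈ (φ i).range := by
  constructor
  · rintro ⟨c, hc⟩
    exact ⟨c, of_injective hφ i ((of_apply_eq_base φ i c).trans hc)⟩
  · rintro ⟨c, rfl⟩
    exact ⟨c, (of_apply_eq_base φ i c).symm⟩

theorem Reduced.inv {w : Word G} (hw : Reduced φ w) : Reduced φ w.inv := by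
  simp only [Reduced, Word.inv, List.mem_reverse, List.mem_map]
  rintro _ ⟨l, hl, rfl⟩
  simpa using hw l hl

theorem Reduced.append {u v : Word G} (hu : Reduced φ u) (hv : Reduced φ v) (h) :
    Reduced φ (u.append v h) := by
  intro l hl
  rcases List.mem_append.1 hl with hl | hl
  exacts [hu l hl, hv l hl]

theorem Reduced.cons {i : ι} {a : G i} {w : Word G} (hw : Reduced φ w) (ha : a ∉ (φ i).range)
    (hmw h1) : Reduced φ (Word.cons a w hmw h1) := by
  intro l hl
  rcases List.mem_cons.1 hl with rfl | hl
  exacts [ha, hw l hl]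

theorem Reduced.conj_notMem_base_range (hφ : ∀ i, Function.Injective (φ i)) {w : Word G}
    (hw : Reduced φ w) {i : ι} (hmw : w.fstIdx ≠ some i) {a : G i} (ha : a ∉ (φ i).range) :
    (ofCoprodI w.prod)⁻¹ * of i a * ofCoprodI w.prod ∉ (base φ).range := by
  intro hmem
  have ha1 : a ≠ 1 := by rintro rfl; exact ha (one_mem _)
  let W := w.inv.append (Word.cons a w hmw ha1) (by
    simp only [Word.inv, List.getLast?_reverse, List.head?_map, Word.cons_toList, List.head?_cons,
      Option.mem_def, Option.map_eq_some_iff, Option.some.injEq]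
    rintro _ ⟨l, hl, rfl⟩ _ rfl
    exact (Word.fstIdx_ne_iff.1 hmw l hl).symm)
  have hW : ofCoprodI (φ := φ) W.prod = (ofCoprodI w.prod)⁻¹ * of i a * ofCoprodI w.prod := by
    simp [W, Word.prod_append, Word.prod_inv, Word.prod_cons, mul_assoc]
  have hWred : Reduced φ W := hw.inv.append (hw.cons ha hmw ha1) _
  have := hWred.eq_empty_of_mem_range hφ (hW ▸ hmem)
  simpa [W, Word.append] using congrArg Word.toList this

theorem Reduced.conj_mem_base_range_of_conj_mul_mem (hφ : ∀ i, Function.Injective (φ i))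
    {w : Word G} (hw : Reduced φ w) {i : ι} (hmw : w.fstIdx ≠ some i) (a : G i)
    {g : PushoutI φ} (hg : g ∈ (base φ).range)
    (h : (of i a * ofCoprodI w.prod)⁻¹ * g * (of i a * ofCoprodI w.prod) ∈ (base φ).range) :
    (of i a)⁻¹ * g * of i a ∈ (base φ).range := by
  by_contra hnot
  obtain ⟨c, rfl⟩ := hg
  have hletter : (of i a)⁻¹ * base φ c * of i a = of i (a⁻¹ * φ i c * a) := by
    simp [← of_apply_eq_base φ i c]
  rw [hletter] at hnot
  refine hw.conj_notMem_base_range hφ hmw (mt (of_mem_base_range_iff hφ).2 hnot) ?_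
  rw [← hletter]
  simpa only [mul_inv_rev, mul_assoc] using h

theorem NormalWord.reduced {d : Transversal φ} (w : NormalWord d) : Reduced φ w.toWord := by
  rintro ⟨i, g⟩ hg hgr
  apply w.ne_one _ hg
  rw [← ((d.compl i).equiv_snd_eq_self_iff_mem (one_mem _)).2 (w.normalized i g hg)]
  exact ((d.compl i).coe_equiv_snd_eq_one_iff_mem (d.one_mem i)).2 hgr

end Monoid.PushoutI

open Monoid.PushoutI

theorem amalgHom_injective (hφ : Function.Injective φ) (hψ : Function.Injective ψ) :
    ∀ i, Function.Injective (amalgHom φ ψ i)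
  | true => hφ
  | false => hψ

theorem amalgC_le_facB : amalgC φ ψ ≤ facB φ ψ := by
  rintro _ ⟨c, rfl⟩
  exact ⟨ψ c, of_apply_eq_base (amalgHom φ ψ) false c⟩

theorem exists_mem_facB_conj_eq (hφ : Function.Injective φ) (hψ : Function.Injective ψ)
    (hmalA : MalnormalIn (amalgC φ ψ) (facA φ ψ)) (x : Amalg φ ψ) {g : Amalg φ ψ}
    (hg : g ∈ amalgC φ ψ) (hx : x⁻¹ * g * x ∈ amalgC φ ψ) :
    ∃ b ∈ facB φ ψ, b⁻¹ * g * b = x⁻¹ * g * x := by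
  classical
  have hinj := amalgHom_injective φ ψ hφ hψ
  obtain ⟨d⟩ := NormalWord.transversal_nonempty (amalgHom φ ψ) hinj
  obtain ⟨w, rfl⟩ : ∃ w : NormalWord d, w.prod = x :=
    ⟨NormalWord.equiv x, NormalWord.equiv.symm_apply_apply x⟩
  induction w using NormalWord.consRecOn generalizing g with
  | empty => exact ⟨1, one_mem _, by simp⟩
  | base c w _ ih =>
    rw [NormalWord.prod_smul] at hx ⊢
    have hgc : (base _ c)⁻¹ * g * base _ c ∈ amalgC φ ψ :=
      mul_mem (mul_mem (inv_mem ⟨c, rfl⟩) hg) ⟨c, rfl⟩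
    obtain ⟨b, hb, hbeq⟩ := ih hgc (by simpa only [mul_inv_rev, mul_assoc] using hx)
    refine ⟨base _ c * b, mul_mem (amalgC_le_facB φ ψ ⟨c, rfl⟩) hb, ?_⟩
    simpa only [mul_inv_rev, mul_assoc] using hbeq
  | cons i g₀ w hmw _ hgr hw1 ih =>
    rw [NormalWord.prod_cons] at hx ⊢
    set x₀ : Amalg φ ψ := of i g₀
    have hwprod : w.prod = ofCoprodI w.toWord.prod := by simp [NormalWord.prod, hw1]
    have hconjC : x₀⁻¹ * g * x₀ ∈ amalgC φ ψ :=
      w.reduced.conj_mem_base_range_of_conj_mul_mem hinj hmw g₀ hg (hwprod ▸ hx)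
    cases i with
    | true =>
      have hx₀ : x₀⁻¹ ∉ amalgC φ ψ := fun hmem =>
        hgr ((of_mem_base_range_iff hinj).1 (by simpa using inv_mem hmem : x₀ ∈ amalgC φ ψ))
      obtain rfl : g = 1 := hmalA x₀⁻¹ (inv_mem ⟨g₀, rfl⟩) hx₀ g hg (by simpa using hconjC)
      exact ⟨1, one_mem _, by simp⟩
    | false =>
      obtain ⟨b, hb, hbeq⟩ := ih hconjC (by simpa only [mul_inv_rev, mul_assoc] using hx)
      exact ⟨x₀ * b, mul_mem ⟨g₀, rfl⟩ hb, by simpa only [mul_inv_rev, mul_assoc] using hbeq⟩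

/-- If `C` is malnormal in the factor `A` of `G = A ∗_C B` and `g, h ∈ C` are conjugate in
`G`, then they are conjugate by an element of `B`. -/
theorem conj_in_B_of_malnormal_A
    (hφ : Function.Injective φ) (hψ : Function.Injective ψ)
    (hmalA : MalnormalIn (amalgC φ ψ) (facA φ ψ))
    (g h : Amalg φ ψ) (hg : g ∈ amalgC φ ψ) (hh : h ∈ amalgC φ ψ)
    (hconj : ∃ x : Amalg φ ψ, x⁻¹ * g * x = h) :
    ∃ b ∈ facB φ ψ, b⁻¹ * g * b = h := by
  obtain ⟨x, rfl⟩ := hconj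
  exact exists_mem_facB_conj_eq φ ψ hφ hψ hmalA x hg hh
end
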